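/- In an intra-regular LA-semihypergroup H with pure left identity, a nonempty subset A is a left hyperideal of H if and only if it is a right hyperideal of H. -/
import Mathlib


open Set

/-- Elementwise extension of a hyperoperation to subsets:
`hmul op A B = ⋃_{a∈A, b∈B} op a b`. -/
def hmul {H : Type*} (op : H → H → Set H) (A B : Set H) : Set H :=
  ⋃ a ∈ A, ⋃ b ∈ B, op a b

section Aux
variable {H : Type*} (op : H → H → Set H)

lemma mem_hmul {A B : Set H} {t : H} :
    t ∈ hmul op A B ↔ ∃ a ∈ A, ∃ b ∈ B, t ∈ op a b := by
  simp [hmul]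

lemma hmul_mono {A A' B B' : Set H} (hA : A ⊆ A') (hB : B ⊆ B') :
    hmul op A B ⊆ hmul op A' B' := by
  intro t ht
  rw [mem_hmul] at ht ⊢
  obtain ⟨a, ha, b, hb, h⟩ := ht
  exact ⟨a, hA ha, b, hB hb, h⟩

lemma hmul_singleton (a b : H) : hmul op {a} {b} = op a b := by simp [hmul]

lemma hmul_ident {e : H} (he : ∀ a : H, op e a = {a}) (A : Set H) :
    hmul op {e} A = A := by
  simp [hmul, he]

lemma sLA (hLA : ∀ x y z : H, hmul op (op x y) {z} = hmul op (op z y) {x})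
    (A B C : Set H) :
    hmul op (hmul op A B) C = hmul op (hmul op C B) A := by
  ext t
  simp only [mem_hmul]
  constructor
  · rintro ⟨u, ⟨a, ha, b, hb, hu⟩, c, hc, ht⟩
    have h1 : t ∈ hmul op (op a b) {c} :=
      (mem_hmul op).2 ⟨u, hu, c, rfl, ht⟩
    rw [hLA a b c] at h1
    obtain ⟨v, hv, a', ha', ht'⟩ := (mem_hmul op).1 h1
    simp only [mem_singleton_iff] at ha'
    subst ha'
    exact ⟨v, ⟨c, hc, b, hb, hv⟩, a', ha, ht'⟩
  · rintro ⟨u, ⟨c, hc, b, hb, hu⟩, a, ha, ht⟩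
    have h1 : t ∈ hmul op (op c b) {a} :=
      (mem_hmul op).2 ⟨u, hu, a, rfl, ht⟩
    rw [← hLA a b c] at h1
    obtain ⟨v, hv, c', hc', ht'⟩ := (mem_hmul op).1 h1
    simp only [mem_singleton_iff] at hc'
    subst hc'
    exact ⟨v, ⟨a, ha, b, hb, hv⟩, c', hc, ht'⟩

lemma sMedial (hLA : ∀ x y z : H, hmul op (op x y) {z} = hmul op (op z y) {x})
    (A B C D : Set H) :
    hmul op (hmul op A B) (hmul op C D) = hmul op (hmul op A C) (hmul op B D) := by
  calc hmul op (hmul op A B) (hmul op C D)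
      = hmul op (hmul op (hmul op C D) B) A := sLA op hLA A B (hmul op C D)
    _ = hmul op (hmul op (hmul op B D) C) A := by rw [sLA op hLA C D B]
    _ = hmul op (hmul op A C) (hmul op B D) := sLA op hLA (hmul op B D) C A

end Aux

theorem stmt18 {H : Type*} (op : H → H → Set H)
    (hne : ∀ a b : H, (op a b).Nonempty)
    (hLA : ∀ x y z : H, hmul op (op x y) {z} = hmul op (op z y) {x})
    (e : H) (he : ∀ a : H, op e a = {a})
    (hir : ∀ a : H, ∃ x y : H, a ∈ hmul op (hmul op {x} (op a a)) {y}) :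
    ∀ A : Set H, A.Nonempty →
      (hmul op Set.univ A ⊆ A ↔ hmul op A Set.univ ⊆ A) := by
  intro A _
  constructor
  · -- left hyperideal → right hyperideal
    intro hL t ht
    obtain ⟨a, ha, h, -, hth⟩ := (mem_hmul op).1 ht
    obtain ⟨x, y, hax⟩ := hir a
    -- op a h ⊆ hmul (hmul (hmul {x} (op a a)) {y}) {h}
    have step1 : op a h ⊆ hmul op (hmul op (hmul op {x} (op a a)) {y}) {h} := by
      rw [← hmul_singleton op a h]
      exact hmul_mono op (singleton_subset_iff.2 hax) subset_rfl
    have step2 : hmul op (hmul op (hmul op {x} (op a a)) {y}) {h}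
        = hmul op (hmul op {h} {y}) (hmul op {x} (op a a)) :=
      sLA op hLA (hmul op {x} (op a a)) {y} {h}
    -- op a a ⊆ A (since it's in H∘A ⊆ A), hence hmul {x} (op a a) ⊆ A
    have haa : hmul op {x} (op a a) ⊆ A := by
      have h1 : op a a ⊆ A := by
        rw [← hmul_singleton op a a]
        exact (hmul_mono op (subset_univ _) (singleton_subset_iff.2 ha)).trans hL
      exact (hmul_mono op (subset_univ _) h1).trans hL
    have : hmul op (hmul op {h} {y}) (hmul op {x} (op a a)) ⊆ A :=
      (hmul_mono op (subset_univ _) haa).trans hL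
    exact this (step2 ▸ step1 hth)
  · -- right hyperideal → left hyperideal
    intro hR t ht
    obtain ⟨h, -, a, ha, hth⟩ := (mem_hmul op).1 ht
    obtain ⟨x, y, hax⟩ := hir a
    have step1 : op h a ⊆ hmul op {h} (hmul op (hmul op {x} (op a a)) {y}) := by
      rw [← hmul_singleton op h a]
      exact hmul_mono op subset_rfl (singleton_subset_iff.2 hax)
    have step2 : hmul op {h} (hmul op (hmul op {x} (op a a)) {y})
        = hmul op (hmul op {x} (op a a)) (hmul op {h} {y}) := by
      calc hmul op {h} (hmul op (hmul op {x} (op a a)) {y})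
          = hmul op (hmul op {e} {h}) (hmul op (hmul op {x} (op a a)) {y}) := by
            rw [hmul_ident op he]
        _ = hmul op (hmul op {e} (hmul op {x} (op a a))) (hmul op {h} {y}) :=
            sMedial op hLA {e} {h} (hmul op {x} (op a a)) {y}
        _ = hmul op (hmul op {x} (op a a)) (hmul op {h} {y}) := by
            rw [hmul_ident op he]
    -- hmul {x} (op a a) ⊆ A
    have haa : hmul op {x} (op a a) ⊆ A := by
      have hxa : hmul op {x} (op a a)
          = hmul op {a} (hmul op {x} {a}) := by
        have h1 : hmul op {x} (op a a) = hmul op (hmul op {e} {x}) (hmul op {a} {a}) := by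
          rw [hmul_ident op he, hmul_singleton op a a]
        rw [h1, sMedial op hLA, hmul_ident op he]
      rw [hxa]
      exact (hmul_mono op (singleton_subset_iff.2 ha) (subset_univ _)).trans hR
    have : hmul op (hmul op {x} (op a a)) (hmul op {h} {y}) ⊆ A :=
      (hmul_mono op haa (subset_univ _)).trans hR
    exact this (step2 ▸ step1 hth)
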